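/- Given a Boolean network f of dimension n and binary configurations x, y ∈ 𝔹^n, y is reachable from x under the most permissive semantics if and only if there exists K ⊆ {1,…,n} such that the smallest K-closed hypercube h containing x satisfies: (1) y ∈ c(h), and (2) for every i ∈ K there exists z ∈ c(h) with f_i(z) = y_i. -/

import Mathlib

inductive PState : Type
  | zero | up | down | one
deriving DecidableEq

def PState.ofBool : Bool → PState
  | false => .zero
  | true  => .one

def PState.isBool (p : PState) : Prop := p = .zero ∨ p = .one

abbrev BN (n : ℕ) := (Fin n → Bool) → Fin n → Bool

def gamma {n : ℕ} (x : Fin n → PState) : Set (Fin n → Bool) :=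
  {b | ∀ i (v : Bool), x i = PState.ofBool v → b i = v}

def mpStep {n : ℕ} (f : BN n) (x y : Fin n → PState) : Prop :=
  ∃ i : Fin n, x i ≠ y i ∧ (∀ j, j ≠ i → x j = y j) ∧
    ((y i = .up ∧ x i ≠ .one ∧ ∃ z ∈ gamma x, f z i = true) ∨
     (y i = .one ∧ x i = .up) ∨
     (y i = .down ∧ x i ≠ .zero ∧ ∃ z ∈ gamma x, f z i = false) ∨
     (y i = .zero ∧ x i = .down))

def mpReachP {n : ℕ} (f : BN n) : (Fin n → PState) → (Fin n → PState) → Prop :=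
  Relation.ReflTransGen (mpStep f)

def embed {n : ℕ} (x : Fin n → Bool) : Fin n → PState := fun i => PState.ofBool (x i)

def mpReach {n : ℕ} (f : BN n) (x : Fin n → Bool) : Set (Fin n → Bool) :=
  {y | mpReachP f (embed x) (embed y)}

def cubeSet {n : ℕ} (h : Fin n → Option Bool) : Set (Fin n → Bool) :=
  {z | ∀ i b, h i = some b → z i = b}

def smaller {n : ℕ} (h h' : Fin n → Option Bool) : Prop :=
  ∀ i b, h' i = some b → h i = some b

def kClosed {n : ℕ} (f : BN n) (K : Finset (Fin n)) (h : Fin n → Option Bool) : Prop :=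
  ∀ z ∈ cubeSet h, ∀ i ∈ K, h i = none ∨ h i = some (f z i)

def closedBy {n : ℕ} (f : BN n) (h : Fin n → Option Bool) : Prop :=
  ∀ z ∈ cubeSet h, f z ∈ cubeSet h

def smallestClosed {n : ℕ} (f : BN n) (x : Fin n → Bool) (h : Fin n → Option Bool) : Prop :=
  x ∈ cubeSet h ∧ closedBy f h ∧
    ∀ h', x ∈ cubeSet h' → closedBy f h' → smaller h h'

def minClosed {n : ℕ} (f : BN n) (h : Fin n → Option Bool) : Prop :=
  closedBy f h ∧ ∀ h', closedBy f h' → smaller h' h → h' = h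

def faStep {n : ℕ} (f : BN n) (x y : Fin n → Bool) : Prop :=
  ∃ i : Fin n, x i ≠ y i ∧ (∀ j, j ≠ i → x j = y j) ∧ y i = f x i

def aStep {n : ℕ} (f : BN n) (x y : Fin n → Bool) : Prop :=
  x ≠ y ∧ ∀ i, x i ≠ y i → y i = f x i

def mnStep {n m : ℕ} (F : (Fin n → Fin (m+1)) → Fin n → ℤ)
    (x y : Fin n → Fin (m+1)) : Prop :=
  x ≠ y ∧ ∀ i, x i ≠ y i → ((y i : ℤ) = (x i : ℤ) + F x i)

def beta {n m : ℕ} (x : Fin n → Fin (m+1)) : Set (Fin n → Bool) :=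
  {b | ∀ i, ((x i : ℕ) = 0 → b i = false) ∧ ((x i : ℕ) = m → b i = true)}

def refines {n m : ℕ} (F : (Fin n → Fin (m+1)) → Fin n → ℤ) (f : BN n) : Prop :=
  ∀ x i, (F x i > 0 → ∃ b ∈ beta x, f b i = true) ∧
         (F x i < 0 → ∃ b ∈ beta x, f b i = false)

def alpha {n m : ℕ} (x : Fin n → Fin (m+1)) : Set (Fin n → PState) :=
  {p | ∀ i, ((x i : ℕ) = 0 ↔ p i = .zero) ∧ ((x i : ℕ) = m ↔ p i = .one)}

def bdStep {n : ℕ} (f : BN n) (L : Finset (Fin n)) (a b : Fin n → PState) : Prop :=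
  mpStep f a b ∧ ∃ j, a j ≠ b j ∧ j ∉ L ∧ (a j).isBool ∧ ¬ (b j).isBool

def exhaustive {n : ℕ} (f : BN n) (x : Fin n → Bool) (L : Finset (Fin n))
    (zhat : Fin n → PState) : Prop :=
  Relation.ReflTransGen (bdStep f L) (embed x) zhat ∧ ∀ z', ¬ bdStep f L zhat z'


-- Auxiliary lemmas
namespace StmtAux

lemma ofBool_inj {a b : Bool} (h : PState.ofBool a = PState.ofBool b) : a = b := by
  cases a <;> cases b <;> simp_all [PState.ofBool]

lemma isBool_ofBool (b : Bool) : (PState.ofBool b).isBool := by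
  cases b <;> simp [PState.ofBool, PState.isBool]

lemma not_isBool {p : PState} (h : ¬ p.isBool) : p = .up ∨ p = .down := by
  cases p <;> simp_all [PState.isBool]

lemma up_ne_ofBool (b : Bool) : PState.up ≠ PState.ofBool b := by
  cases b <;> simp [PState.ofBool]

lemma down_ne_ofBool (b : Bool) : PState.down ≠ PState.ofBool b := by
  cases b <;> simp [PState.ofBool]

lemma mem_gamma {n : ℕ} {s : Fin n → PState} {z : Fin n → Bool} :
    z ∈ gamma s ↔ ∀ i v, s i = PState.ofBool v → z i = v := Iff.rfl

lemma mem_cubeSet {n : ℕ} {h : Fin n → Option Bool} {z : Fin n → Bool} :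
    z ∈ cubeSet h ↔ ∀ i b, h i = some b → z i = b := Iff.rfl

end StmtAux


namespace StmtAux

variable {n : ℕ}

/-- state with coordinates in `A` set to `d`, others to `x`. -/
def stA (x : Fin n → Bool) (A : Finset (Fin n)) (d : Fin n → PState) : Fin n → PState :=
  fun i => if i ∈ A then d i else PState.ofBool (x i)

lemma mem_gamma_stA {x : Fin n → Bool} {A : Finset (Fin n)} {d : Fin n → PState}
    (hd : ∀ i ∈ A, d i = .up ∨ d i = .down) {z : Fin n → Bool} :
    z ∈ gamma (stA x A d) ↔ ∀ i ∉ A, z i = x i := by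
  constructor
  · intro hz i hiA
    exact hz i (x i) (by simp [stA, hiA])
  · intro hz i v hv
    by_cases hiA : i ∈ A
    · exfalso
      rcases hd i hiA with h' | h' <;> simp [stA, hiA, h'] at hv
      · exact up_ne_ofBool v hv
      · exact down_ne_ofBool v hv
    · simp only [stA, if_neg hiA] at hv
      rw [hz i hiA, ofBool_inj hv]

/-- the free coordinates of a cube -/
def FreeSet (h : Fin n → Option Bool) : Finset (Fin n) :=
  Finset.univ.filter (fun i => h i = none)

lemma mem_FreeSet {h : Fin n → Option Bool} {i : Fin n} :
    i ∈ FreeSet h ↔ h i = none := by simp [FreeSet]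

end StmtAux


namespace StmtAux

variable {n : ℕ}

lemma phase1 (f : BN n) (x : Fin n → Bool) (K : Finset (Fin n)) (h : Fin n → Option Bool)
    (H1 : x ∈ cubeSet h) (H2 : kClosed f K h)
    (H3 : ∀ h', x ∈ cubeSet h' → kClosed f K h' → smaller h h') :
    ∃ d : Fin n → PState, (∀ i ∈ FreeSet h, d i = .up ∨ d i = .down) ∧
      mpReachP f (embed x) (stA x (FreeSet h) d) := by
  have key : ∀ m : ℕ, ∀ A : Finset (Fin n), ∀ d : Fin n → PState,
      A ⊆ FreeSet h → (FreeSet h \ A).card = m → (∀ i ∈ A, d i = .up ∨ d i = .down) →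
      mpReachP f (embed x) (stA x A d) →
      ∃ d', (∀ i ∈ FreeSet h, d' i = .up ∨ d' i = .down) ∧
        mpReachP f (embed x) (stA x (FreeSet h) d') := by
    intro m
    induction m using Nat.strong_induction_on with
    | _ m IH =>
      intro A d hsub hcard hd hreach
      by_cases hAF : FreeSet h ⊆ A
      · have hA : A = FreeSet h := Finset.Subset.antisymm hsub hAF
        exact ⟨d, hA ▸ hd, hA ▸ hreach⟩
      · set gA : Fin n → Option Bool := fun i => if i ∈ A then none else some (x i) with hgA
        have hxgA : x ∈ cubeSet gA := by
          intro i b hib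
          by_cases hiA : i ∈ A
          · simp [hgA, hiA] at hib
          · simp only [hgA, if_neg hiA, Option.some.injEq] at hib
            exact hib
        have hnk : ¬ kClosed f K gA := by
          intro hk
          obtain ⟨i, hiF, hiA⟩ := Finset.not_subset.mp hAF
          have := H3 gA hxgA hk i (x i) (by simp [hgA, hiA])
          rw [mem_FreeSet.mp hiF] at this
          exact nomatch this
        rw [kClosed] at hnk; push_neg at hnk
        obtain ⟨z, hz, i, hiK, hne_none, hne_some⟩ := hnk
        have hiA : i ∉ A := by intro hiA; exact hne_none (by simp [hgA, hiA])
        have hgAi : gA i = some (x i) := by simp [hgA, hiA]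
        have hfzi : f z i ≠ x i := by
          intro hEq; exact hne_some (by rw [hgAi, hEq])
        have hzA : ∀ j ∉ A, z j = x j := fun j hj => hz j (x j) (by simp [hgA, hj])
        have hzh : z ∈ cubeSet h := by
          intro j b hjb
          have hjA : j ∉ A := by
            intro hjA
            rw [mem_FreeSet.mp (hsub hjA)] at hjb
            exact nomatch hjb
          have := H1 j b hjb
          rw [hzA j hjA, this]
        have hiF : i ∈ FreeSet h := by
          rw [mem_FreeSet]
          rcases H2 z hzh i hiK with hnone | hsome
          · exact hnone
          · exact absurd (H1 i (f z i) hsome).symm hfzi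
        set v : PState := if x i = true then PState.down else PState.up with hv
        set d' := Function.update d i v with hd'
        have hd'' : ∀ j ∈ insert i A, d' j = .up ∨ d' j = .down := by
          intro j hj
          rcases Finset.mem_insert.mp hj with rfl | hjA
          · rw [hd', Function.update_self, hv]
            cases x j <;> simp
          · rw [hd', Function.update_of_ne (by rintro rfl; exact hiA hjA)]
            exact hd j hjA
        have hzg : z ∈ gamma (stA x A d) := (mem_gamma_stA hd).mpr hzA
        have hstep : mpStep f (stA x A d) (stA x (insert i A) d') := by
          refine ⟨i, ?_, ?_, ?_⟩
          · simp only [stA, if_neg hiA, Finset.mem_insert, if_pos (Or.inl rfl), hd',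
              Function.update_self, hv]
            cases x i <;> simp [PState.ofBool]
          · intro j hj
            by_cases hjA : j ∈ A
            · simp only [stA, if_pos hjA, if_pos (Finset.mem_insert.mpr (Or.inr hjA)), hd',
                Function.update_of_ne hj]
            · have : j ∉ insert i A := by
                rw [Finset.mem_insert]; rintro (rfl | hc); exact hj rfl; exact hjA hc
              simp only [stA, if_neg hjA, if_neg this]
          · have hsti : stA x (insert i A) d' i = v := by
              simp [stA, hd', Function.update_self]
            have hsrc : stA x A d i = PState.ofBool (x i) := by simp [stA, hiA]
            cases hxi : x i with
            | false =>
              refine Or.inl ⟨by rw [hsti, hv, hxi]; rfl, ?_, z, hzg, ?_⟩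
              · rw [hsrc, hxi]; simp [PState.ofBool]
              · rw [hxi] at hfzi
                revert hfzi; cases f z i <;> simp
            | true =>
              refine Or.inr (Or.inr (Or.inl ⟨by rw [hsti, hv, hxi]; rfl, ?_, z, hzg, ?_⟩))
              · rw [hsrc, hxi]; simp [PState.ofBool]
              · rw [hxi] at hfzi
                revert hfzi; cases f z i <;> simp
        have hreach' : mpReachP f (embed x) (stA x (insert i A) d') :=
          Relation.ReflTransGen.tail hreach hstep
        have hss : FreeSet h \ insert i A ⊂ FreeSet h \ A := by
          refine (Finset.ssubset_iff_of_subset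
            (Finset.sdiff_subset_sdiff (le_refl _) (Finset.subset_insert i A))).mpr ?_
          exact ⟨i, Finset.mem_sdiff.mpr ⟨hiF, hiA⟩, by simp⟩
        have hlt : (FreeSet h \ insert i A).card < m := hcard ▸ Finset.card_lt_card hss
        exact IH _ hlt (insert i A) d' (Finset.insert_subset_iff.mpr ⟨hiF, hsub⟩) rfl hd'' hreach'
  refine key _ ∅ (fun _ => .up) (Finset.empty_subset _) rfl (by simp) ?_
  have : stA x ∅ (fun _ => .up) = embed x := funext fun i => by simp [stA, embed]
  rw [this]
  exact Relation.ReflTransGen.refl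

end StmtAux


namespace StmtAux

variable {n : ℕ}

lemma cube_subset_gamma_stA {x : Fin n → Bool} {h : Fin n → Option Bool}
    (H1 : x ∈ cubeSet h) {d : Fin n → PState}
    (hd : ∀ i ∈ FreeSet h, d i = .up ∨ d i = .down)
    {z : Fin n → Bool} (hz : z ∈ cubeSet h) :
    z ∈ gamma (stA x (FreeSet h) d) := by
  rw [mem_gamma_stA hd]
  intro j hj
  rw [mem_FreeSet] at hj
  match hjb : h j with
  | none => exact absurd hjb hj
  | some b => rw [hz j b hjb, H1 j b hjb]

lemma free_subset_K (f : BN n) (x : Fin n → Bool) (K : Finset (Fin n))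
    (h : Fin n → Option Bool) (H1 : x ∈ cubeSet h)
    (H2 : kClosed f K h)
    (H3 : ∀ h', x ∈ cubeSet h' → kClosed f K h' → smaller h h') :
    FreeSet h ⊆ K := by
  intro i hi
  by_contra hiK
  set g : Fin n → Option Bool := fun j => if j ∈ K then h j else some (x j) with hg
  have hxg : x ∈ cubeSet g := by
    intro j b hjb
    by_cases hjK : j ∈ K
    · simp only [hg, if_pos hjK] at hjb
      exact H1 j b hjb
    · simp only [hg, if_neg hjK, Option.some.injEq] at hjb
      exact hjb
  have hsubc : ∀ z ∈ cubeSet g, z ∈ cubeSet h := by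
    intro z hz j b hjb
    by_cases hjK : j ∈ K
    · exact hz j b (by simp only [hg, if_pos hjK]; exact hjb)
    · rw [hz j (x j) (by simp [hg, hjK]), H1 j b hjb]
  have hkg : kClosed f K g := by
    intro z hz j hjK
    have := H2 z (hsubc z hz) j hjK
    simpa only [hg, if_pos hjK] using this
  have := H3 g hxg hkg i (x i) (by simp [hg, hiK])
  rw [mem_FreeSet.mp hi] at this
  exact nomatch this

lemma phase2 (f : BN n) (x y : Fin n → Bool) (K : Finset (Fin n))
    (h : Fin n → Option Bool) (H1 : x ∈ cubeSet h)
    (H5 : ∀ i ∈ K, ∃ z ∈ cubeSet h, f z i = y i) (hFK : FreeSet h ⊆ K)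
    (d : Fin n → PState) (hd : ∀ i ∈ FreeSet h, d i = .up ∨ d i = .down) :
    mpReachP f (stA x (FreeSet h) d)
      (stA x (FreeSet h) (fun i => if y i then .up else .down)) := by
  set dtgt : Fin n → PState := fun i => if y i then .up else .down with hdtgt
  have key : ∀ B : Finset (Fin n), B ⊆ FreeSet h →
      mpReachP f (stA x (FreeSet h) d)
        (stA x (FreeSet h) (fun i => if i ∈ B then dtgt i else d i)) := by
    intro B
    induction B using Finset.induction_on with
    | empty =>
      intro _
      have : (stA x (FreeSet h) (fun i => if i ∈ (∅ : Finset (Fin n)) then dtgt i else d i))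
          = stA x (FreeSet h) d := funext fun i => by simp [stA]
      rw [this]
      exact Relation.ReflTransGen.refl
    | @insert a B haB IH =>
      intro hsub
      have haF : a ∈ FreeSet h := hsub (Finset.mem_insert_self a B)
      have hBsub : B ⊆ FreeSet h := fun j hj => hsub (Finset.mem_insert_of_mem hj)
      have hreach := IH hBsub
      set dB : Fin n → PState := fun i => if i ∈ B then dtgt i else d i with hdB
      have hdBtr : ∀ i ∈ FreeSet h, dB i = .up ∨ dB i = .down := by
        intro i hi
        by_cases hiB : i ∈ B
        · simp only [hdB, if_pos hiB, hdtgt]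
          cases y i <;> simp
        · simp only [hdB, if_neg hiB]
          exact hd i hi
      have hfun : ∀ j, j ≠ a →
          (if j ∈ insert a B then dtgt j else d j) = dB j := by
        intro j hj
        simp only [hdB, Finset.mem_insert]
        by_cases hjB : j ∈ B <;> simp [hj, hjB]
      by_cases hcase : d a = dtgt a
      · have : stA x (FreeSet h) (fun i => if i ∈ insert a B then dtgt i else d i)
            = stA x (FreeSet h) dB := by
          funext i
          by_cases hia : i = a
          · subst hia
            simp [stA, hdB, haB, hcase]
          · simp only [stA]
            rw [hfun i hia]
        rw [this]
        exact hreach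
      · refine Relation.ReflTransGen.tail hreach ⟨a, ?_, ?_, ?_⟩
        · simp only [stA, if_pos haF, hdB, if_neg haB, Finset.mem_insert_self, if_pos]
          exact hcase
        · intro j hj
          by_cases hjF : j ∈ FreeSet h
          · simp only [stA, if_pos hjF]
            rw [hfun j hj]
          · simp only [stA, if_neg hjF]
        · obtain ⟨z, hz, hfz⟩ := H5 a (hFK haF)
          have hzg : z ∈ gamma (stA x (FreeSet h) dB) := cube_subset_gamma_stA H1 hdBtr hz
          have hsrc : stA x (FreeSet h) dB a = d a := by
            simp [stA, haF, hdB, haB]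
          have htgt : stA x (FreeSet h)
              (fun i => if i ∈ insert a B then dtgt i else d i) a = dtgt a := by
            simp [stA, haF]
          rcases hd a haF with hda | hda
          · -- d a = up, so dtgt a = down, y a = false
            have hya : y a = false := by
              by_contra hya
              rw [Bool.not_eq_false] at hya
              exact hcase (by rw [hda, hdtgt]; simp [hya])
            refine Or.inr (Or.inr (Or.inl ⟨?_, ?_, z, hzg, ?_⟩))
            · rw [htgt, hdtgt]; simp [hya]
            · rw [hsrc, hda]; simp
            · rw [hfz, hya]
          · have hya : y a = true := by
              by_contra hya
              rw [Bool.not_eq_true] at hya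
              exact hcase (by rw [hda, hdtgt]; simp [hya])
            refine Or.inl ⟨?_, ?_, z, hzg, ?_⟩
            · rw [htgt, hdtgt]; simp [hya]
            · rw [hsrc, hda]; simp
            · rw [hfz, hya]
  have := key (FreeSet h) (le_refl _)
  have heq : stA x (FreeSet h) (fun i => if i ∈ FreeSet h then dtgt i else d i)
      = stA x (FreeSet h) dtgt := by
    funext i
    by_cases hiF : i ∈ FreeSet h <;> simp [stA, hiF]
  rw [heq] at this
  exact this

lemma phase3 (f : BN n) (x y : Fin n → Bool) (h : Fin n → Option Bool)
    (H1 : x ∈ cubeSet h) (H4 : y ∈ cubeSet h) :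
    mpReachP f (stA x (FreeSet h) (fun i => if y i then .up else .down)) (embed y) := by
  set dtgt : Fin n → PState := fun i => if y i then PState.up else PState.down with hdtgt
  set cl : Finset (Fin n) → (Fin n → PState) :=
    fun B i => if i ∈ B then PState.ofBool (y i) else stA x (FreeSet h) dtgt i with hcl
  have key : ∀ B : Finset (Fin n), B ⊆ FreeSet h →
      mpReachP f (stA x (FreeSet h) dtgt) (cl B) := by
    intro B
    induction B using Finset.induction_on with
    | empty =>
      intro _
      have : cl ∅ = stA x (FreeSet h) dtgt := funext fun i => by simp [hcl]
      rw [this]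
      exact Relation.ReflTransGen.refl
    | @insert a B haB IH =>
      intro hsub
      have haF : a ∈ FreeSet h := hsub (Finset.mem_insert_self a B)
      have hBsub : B ⊆ FreeSet h := fun j hj => hsub (Finset.mem_insert_of_mem hj)
      refine Relation.ReflTransGen.tail (IH hBsub) ⟨a, ?_, ?_, ?_⟩
      · simp only [hcl, if_neg haB, Finset.mem_insert_self, if_pos, stA, if_pos haF, hdtgt]
        cases y a <;> simp [PState.ofBool]
      · intro j hj
        simp only [hcl, Finset.mem_insert]
        by_cases hjB : j ∈ B <;> simp [hj, hjB]
      · have hsrc : cl B a = dtgt a := by simp [hcl, haB, stA, haF]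
        have htgt : cl (insert a B) a = PState.ofBool (y a) := by
          simp [hcl]
        cases hya : y a with
        | true =>
          refine Or.inr (Or.inl ⟨?_, ?_⟩)
          · rw [htgt, hya]; rfl
          · rw [hsrc, hdtgt]; simp [hya]
        | false =>
          refine Or.inr (Or.inr (Or.inr ⟨?_, ?_⟩))
          · rw [htgt, hya]; rfl
          · rw [hsrc, hdtgt]; simp [hya]
  have := key (FreeSet h) (le_refl _)
  have heq : cl (FreeSet h) = embed y := by
    funext i
    by_cases hiF : i ∈ FreeSet h
    · simp [hcl, hiF, embed]
    · simp only [hcl, if_neg hiF, stA, if_neg hiF, embed]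
      rw [mem_FreeSet] at hiF
      match hib : h i with
      | none => exact absurd hib hiF
      | some b => rw [H1 i b hib, H4 i b hib]
  rw [heq] at this
  exact this

end StmtAux


namespace StmtAux

variable {n : ℕ}

lemma reach_chain {α : Type*} {r : α → α → Prop} {a b : α} (hab : Relation.ReflTransGen r a b) :
    ∃ l : List α, List.Chain r a l ∧ (a :: l).getLast (List.cons_ne_nil _ _) = b := by
  induction hab using Relation.ReflTransGen.head_induction_on with
  | refl => exact ⟨[], List.Chain.nil, rfl⟩
  | head hac _ ih =>
    obtain ⟨l, hc, hl⟩ := ih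
    exact ⟨_ :: l, List.Chain.cons hac hc, by rw [List.getLast_cons (List.cons_ne_nil _ _)]; exact hl⟩

open Classical in
noncomputable def hmin (f : BN n) (K : Finset (Fin n)) (x : Fin n → Bool) :
    Fin n → Option Bool :=
  fun i => if ∃ h', x ∈ cubeSet h' ∧ kClosed f K h' ∧ h' i ≠ none then some (x i) else none

lemma hmin_val {f : BN n} {K : Finset (Fin n)} {x : Fin n → Bool} {i : Fin n} {b : Bool}
    (hb : hmin f K x i = some b) : b = x i := by
  unfold hmin at hb
  split at hb
  · exact (Option.some.injEq _ _ ▸ hb).symm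
  · exact nomatch hb

lemma x_mem_hmin (f : BN n) (K : Finset (Fin n)) (x : Fin n → Bool) :
    x ∈ cubeSet (hmin f K x) := fun _ b hb => (hmin_val hb).symm

lemma hmin_smaller (f : BN n) (K : Finset (Fin n)) (x : Fin n → Bool) :
    ∀ h', x ∈ cubeSet h' → kClosed f K h' → smaller (hmin f K x) h' := by
  intro h' hx hk i b hib
  have hbx : b = x i := (hx i b hib).symm
  have : ∃ h'', x ∈ cubeSet h'' ∧ kClosed f K h'' ∧ h'' i ≠ none :=
    ⟨h', hx, hk, by rw [hib]; exact fun hc => nomatch hc⟩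
  rw [hbx]
  unfold hmin
  rw [if_pos this]

lemma cube_hmin_subset {f : BN n} {K : Finset (Fin n)} {x : Fin n → Bool}
    {h' : Fin n → Option Bool} (hx : x ∈ cubeSet h') (hk : kClosed f K h') :
    ∀ z ∈ cubeSet (hmin f K x), z ∈ cubeSet h' := by
  intro z hz i b hib
  exact hz i b (hmin_smaller f K x h' hx hk i b hib)

lemma hmin_kClosed (f : BN n) (K : Finset (Fin n)) (x : Fin n → Bool) :
    kClosed f K (hmin f K x) := by
  intro z hz i hiK
  by_cases hc : ∃ h', x ∈ cubeSet h' ∧ kClosed f K h' ∧ h' i ≠ none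
  · obtain ⟨h', hx', hk', hne⟩ := hc
    have hzh' : z ∈ cubeSet h' := cube_hmin_subset hx' hk' z hz
    rcases hk' z hzh' i hiK with hnone | hsome
    · exact absurd hnone hne
    · have : x i = f z i := hx' i (f z i) hsome
      right
      rw [← this]
      unfold hmin
      rw [if_pos ⟨h', hx', hk', hne⟩]
  · left
    unfold hmin
    rw [if_neg hc]

/-- The forward invariant along a most-permissive trace. -/
def InvP (f : BN n) (x : Fin n → Bool) (K : Finset (Fin n)) (h0 : Fin n → Option Bool)
    (s : Fin n → PState) : Prop :=
  (∀ h', x ∈ cubeSet h' → kClosed f K h' → ∀ j b, h' j = some b → s j = PState.ofBool b) ∧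
  (∀ i, (s i = .up → ∃ z ∈ cubeSet h0, f z i = true) ∧
        (s i = .down → ∃ z ∈ cubeSet h0, f z i = false))

lemma gamma_sub_cube {f : BN n} {x : Fin n → Bool} {K : Finset (Fin n)}
    {h0 : Fin n → Option Bool} {s : Fin n → PState}
    (hs : InvP f x K h0 s) {h' : Fin n → Option Bool}
    (hx' : x ∈ cubeSet h') (hk' : kClosed f K h') :
    ∀ z ∈ gamma s, z ∈ cubeSet h' := by
  intro z hz j b hjb
  exact hz j b (hs.1 h' hx' hk' j b hjb)

lemma inv_step {f : BN n} {x : Fin n → Bool} {K : Finset (Fin n)}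
    {h0 : Fin n → Option Bool} (hx0 : x ∈ cubeSet h0) (hk0 : kClosed f K h0)
    {s t : Fin n → PState} (hst : mpStep f s t)
    (hKt : ∀ j, ¬ (t j).isBool → j ∈ K) (hs : InvP f x K h0 s) :
    InvP f x K h0 t := by
  obtain ⟨i, hne, hframe, hcases⟩ := hst
  constructor
  · intro h' hx' hk' j b hjb
    by_cases hji : j = i
    · subst hji
      rcases hcases with ⟨hti, hnot1, z, hz, hfz⟩ | ⟨hti, hsi⟩ | ⟨hti, hnot0, z, hz, hfz⟩ | ⟨hti, hsi⟩
      · exfalso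
        have hiK : j ∈ K := hKt j (by rw [hti]; simp [PState.isBool])
        have hz' : z ∈ cubeSet h' := gamma_sub_cube hs hx' hk' z hz
        rcases hk' z hz' j hiK with hnone | hsome
        · rw [hjb] at hnone; exact nomatch hnone
        · rw [hjb, hfz] at hsome
          have hb : b = true := Option.some.injEq _ _ ▸ hsome
          have := hs.1 h' hx' hk' j b hjb
          rw [hb] at this
          exact hnot1 this
      · exfalso
        have := hs.1 h' hx' hk' j b hjb
        rw [hsi] at this
        exact up_ne_ofBool b this
      · exfalso
        have hiK : j ∈ K := hKt j (by rw [hti]; simp [PState.isBool])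
        have hz' : z ∈ cubeSet h' := gamma_sub_cube hs hx' hk' z hz
        rcases hk' z hz' j hiK with hnone | hsome
        · rw [hjb] at hnone; exact nomatch hnone
        · rw [hjb, hfz] at hsome
          have hb : b = false := Option.some.injEq _ _ ▸ hsome
          have := hs.1 h' hx' hk' j b hjb
          rw [hb] at this
          exact hnot0 this
      · exfalso
        have := hs.1 h' hx' hk' j b hjb
        rw [hsi] at this
        exact down_ne_ofBool b this
    · rw [← hframe j hji]
      exact hs.1 h' hx' hk' j b hjb
  · intro k
    by_cases hki : k = i
    · subst hki
      rcases hcases with ⟨hti, _, z, hz, hfz⟩ | ⟨hti, _⟩ | ⟨hti, _, z, hz, hfz⟩ | ⟨hti, _⟩ <;>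
        rw [hti] <;> constructor <;> intro hE <;> try exact PState.noConfusion hE
      · exact ⟨z, gamma_sub_cube hs hx0 hk0 z hz, hfz⟩
      · exact ⟨z, gamma_sub_cube hs hx0 hk0 z hz, hfz⟩
    · constructor
      · intro hk
        exact (hs.2 k).1 (by rw [hframe k hki]; exact hk)
      · intro hk
        exact (hs.2 k).2 (by rw [hframe k hki]; exact hk)

lemma inv_chain {f : BN n} {x : Fin n → Bool} {K : Finset (Fin n)}
    {h0 : Fin n → Option Bool} (hx0 : x ∈ cubeSet h0) (hk0 : kClosed f K h0) :
    ∀ (l : List (Fin n → PState)) (s0 : Fin n → PState), List.Chain (mpStep f) s0 l →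
      (∀ t ∈ s0 :: l, ∀ j, ¬ (t j).isBool → j ∈ K) →
      InvP f x K h0 s0 → ∀ t ∈ s0 :: l, InvP f x K h0 t := by
  intro l
  induction l with
  | nil =>
    intro s0 _ _ h0' t ht
    rw [List.mem_singleton] at ht
    subst ht; exact h0'
  | cons c l IH =>
    intro s0 hch hK hInv t ht
    have hstep : mpStep f s0 c := (List.chain_cons.mp hch).1
    have hchl : List.Chain (mpStep f) c l := (List.chain_cons.mp hch).2
    have hInvc : InvP f x K h0 c :=
      inv_step hx0 hk0 hstep (fun j hj => hK c (by simp) j hj) hInv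
    rcases List.mem_cons.mp ht with rfl | htl
    · exact hInv
    · exact IH c hchl (fun t' ht' j hj => hK t' (by simp [List.mem_cons] at ht' ⊢; tauto) j hj)
        hInvc t htl

lemma dir_chain {f : BN n} {y : Fin n → Bool} :
    ∀ (l : List (Fin n → PState)) (s0 : Fin n → PState), List.Chain (mpStep f) s0 l →
      (s0 :: l).getLast (List.cons_ne_nil _ _) = embed y →
      ∀ s ∈ s0 :: l, ∀ i, s i ≠ PState.ofBool (y i) →
        ∃ t ∈ s0 :: l, t i = (if y i then PState.up else PState.down) := by
  intro l
  induction l with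
  | nil =>
    intro s0 _ hlast s hs i hi
    rw [List.mem_singleton] at hs
    subst hs
    rw [List.getLast_singleton] at hlast
    exact absurd (by rw [hlast]; rfl) hi
  | cons c l IH =>
    intro s0 hch hlast s hs i hi
    have hstep : mpStep f s0 c := (List.chain_cons.mp hch).1
    have hchl : List.Chain (mpStep f) c l := (List.chain_cons.mp hch).2
    have hlast' : (c :: l).getLast (List.cons_ne_nil _ _) = embed y := by
      rw [List.getLast_cons (List.cons_ne_nil _ _)] at hlast
      exact hlast
    rcases List.mem_cons.mp hs with rfl | hsl
    · -- s = s0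
      by_cases hc : c i = PState.ofBool (y i)
      · -- the step changed coordinate i to its final boolean value
        obtain ⟨j, hne, hframe, hcases⟩ := hstep
        have hji : j = i := by
          by_contra hji
          have := hframe i (fun hE => hji hE.symm)
          rw [this] at hi
          exact hi hc
        subst hji
        rcases hcases with ⟨hci, -⟩ | ⟨hci, hsi⟩ | ⟨hci, -⟩ | ⟨hci, hsi⟩
        · exact absurd (hc.symm.trans hci).symm (up_ne_ofBool (y j))
        · cases hyi : y j with
          | true => exact ⟨s, by simp, by rw [hsi]; rfl⟩
          | false =>
            exfalso
            rw [hyi] at hc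
            rw [hc] at hci
            exact PState.noConfusion hci
        · exact absurd (hc.symm.trans hci).symm (down_ne_ofBool (y j))
        · cases hyi : y j with
          | false => exact ⟨s, by simp, by rw [hsi]; rfl⟩
          | true =>
            exfalso
            rw [hyi] at hc
            rw [hc] at hci
            exact PState.noConfusion hci
      · obtain ⟨t, ht, hti⟩ := IH c hchl hlast' c (by simp) i hc
        exact ⟨t, List.mem_cons_of_mem _ ht, hti⟩
    · obtain ⟨t, ht, hti⟩ := IH c hchl hlast' s hsl i hi
      exact ⟨t, List.mem_cons_of_mem _ ht, hti⟩

end StmtAux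


open StmtAux in
theorem stmt4' {n : ℕ} (f : BN n) (x y : Fin n → Bool) :
    mpReachP f (embed x) (embed y) ↔
      ∃ (K : Finset (Fin n)) (h : Fin n → Option Bool),
        (x ∈ cubeSet h ∧ kClosed f K h ∧
          ∀ h', x ∈ cubeSet h' → kClosed f K h' → smaller h h') ∧
        y ∈ cubeSet h ∧
        ∀ i ∈ K, ∃ z ∈ cubeSet h, f z i = y i := by
  classical
  constructor
  · intro hy
    obtain ⟨l, hch, hlast⟩ := reach_chain hy
    set K : Finset (Fin n) :=
      Finset.univ.filter (fun i => ∃ s ∈ embed x :: l, ¬ (s i).isBool) with hK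
    have hmemK : ∀ i, (∃ s ∈ embed x :: l, ¬ (s i).isBool) → i ∈ K := by
      intro i hi
      rw [hK]
      simp only [Finset.mem_filter, Finset.mem_univ, true_and]
      exact hi
    set h : Fin n → Option Bool := hmin f K x with hh
    have hx0 := x_mem_hmin f K x
    have hk0 := hmin_kClosed f K x
    have hInv0 : InvP f x K h (embed x) := by
      constructor
      · intro h' hx' _ j b hjb
        show PState.ofBool (x j) = PState.ofBool b
        rw [hx' j b hjb]
      · intro i
        constructor <;> intro hE <;> exfalso
        · exact up_ne_ofBool (x i) hE.symm
        · exact down_ne_ofBool (x i) hE.symm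
    have hInvAll := inv_chain hx0 hk0 l (embed x) hch
      (fun t ht j hj => hmemK j ⟨t, ht, hj⟩) hInv0
    have hyT : embed y ∈ embed x :: l := by
      have := List.getLast_mem (List.cons_ne_nil (embed x) l)
      rw [hlast] at this
      exact this
    refine ⟨K, h, ⟨hx0, hk0, hmin_smaller f K x⟩, ?_, ?_⟩
    · intro j b hjb
      have := (hInvAll (embed y) hyT).1 h hx0 hk0 j b hjb
      exact ofBool_inj this
    · intro i hiK
      obtain ⟨s, hsT, hnb⟩ := (Finset.mem_filter.mp hiK).2
      have hsne : s i ≠ PState.ofBool (y i) := fun hE => hnb (hE ▸ isBool_ofBool (y i))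
      obtain ⟨t, htT, hti⟩ := dir_chain l (embed x) hch hlast s hsT i hsne
      have hInvt := hInvAll t htT
      cases hyi : y i with
      | true =>
        rw [hyi] at hti
        simp only [if_true] at hti
        obtain ⟨z, hz, hfz⟩ := (hInvt.2 i).1 hti
        exact ⟨z, hz, hfz⟩
      | false =>
        rw [hyi] at hti
        simp only [Bool.false_eq_true, if_false] at hti
        obtain ⟨z, hz, hfz⟩ := (hInvt.2 i).2 hti
        exact ⟨z, hz, hfz⟩
  · rintro ⟨K, h, ⟨H1, H2, H3⟩, H4, H5⟩
    obtain ⟨d, hd, hr1⟩ := phase1 f x K h H1 H2 H3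
    have hr2 := phase2 f x y K h H1 H5 (free_subset_K f x K h H1 H2 H3) d hd
    have hr3 := phase3 f x y h H1 H4
    exact (hr1.trans hr2).trans hr3


theorem stmt4 {n : ℕ} (f : BN n) (x y : Fin n → Bool) :
    y ∈ mpReach f x ↔
      ∃ (K : Finset (Fin n)) (h : Fin n → Option Bool),
        (x ∈ cubeSet h ∧ kClosed f K h ∧
          ∀ h', x ∈ cubeSet h' → kClosed f K h' → smaller h h') ∧
        y ∈ cubeSet h ∧
        ∀ i ∈ K, ∃ z ∈ cubeSet h, f z i = y i := stmt4' f x y
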